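/- Let Λ = (G,γ) be an admissible d-colored multigraph with nonempty vertex set. The rank-1 elements (vertices) of P_Λ are exactly the pairs (H, {1,…,d}\{i}) with i ∈ {1,…,d} and H a connected component of G_{{1,…,d}\{i}}; and the map ψ sending such a vertex to i is a proper d-coloring of P_Λ: for every (H,S) ∈ P_Λ, assigning to each vertex v ≤ (H,S) of P_Λ the color ψ(v) gives a bijection from the set of vertices below (H,S) onto {1,…,d} \ S. In particular, distinct vertices lying below a common element of P_Λ receive distinct colors. -/

import Mathlib

noncomputable section
attribute [local instance] Classical.propDecidable

/-- A finite multigraph with colored edges, given by a finite vertex set `Vs` inside an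
ambient type `V` and a finite set of edges; an edge is a triple `(u, v, i)` recording its
two endpoints (in an arbitrary chosen orientation) and its color `i`.  Since every vertex
of an admissible colored multigraph is incident to at most one edge of each color, this
faithfully represents the multigraphs occurring in crystallization theory. -/
structure MG (V : Type) where
  Vs : Finset V
  Es : Finset (V × V × ℕ)

namespace MG

variable {V : Type}

/-- The edge `e` joins the vertices `u` and `v`, i.e. `φ(e) = {u, v}`. -/
def joins (e : V × V × ℕ) (u v : V) : Prop :=
  (e.1 = u ∧ e.2.1 = v) ∨ (e.1 = v ∧ e.2.1 = u)

/-- The vertex `v` is an endpoint of the edge `e`. -/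
def incid (e : V × V × ℕ) (v : V) : Prop := e.1 = v ∨ e.2.1 = v

/-- Adjacency in the spanning subgraph `G_S` of edges whose color lies in `S`. -/
def Adj (G : MG V) (S : Finset ℕ) (u v : V) : Prop :=
  u ∈ G.Vs ∧ v ∈ G.Vs ∧ ∃ e ∈ G.Es, e.2.2 ∈ S ∧ joins e u v

/-- `G.Conn S u v`: `u` and `v` are connected by a path of edges of `G_S`.
Two vertices are *disconnected* on `G_S` if `¬ G.Conn S u v`. -/
def Conn (G : MG V) (S : Finset ℕ) : V → V → Prop :=
  Relation.ReflTransGen (G.Adj S)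

/-- Well-formedness of a multigraph with colors in `K`: endpoints of edges are vertices,
there are no loops, and all colors lie in `K`. -/
def WF (K : Finset ℕ) (G : MG V) : Prop :=
  ∀ e ∈ G.Es, e.1 ∈ G.Vs ∧ e.2.1 ∈ G.Vs ∧ e.1 ≠ e.2.1 ∧ e.2.2 ∈ K

/-- Admissibility of a `K`-colored multigraph: it is (loopless and) connected, and for
each color `i ∈ K` the edges of color `i` form a perfect matching of the vertex set. -/
def Admissible (K : Finset ℕ) (G : MG V) : Prop :=
  WF K G ∧ (∀ u ∈ G.Vs, ∀ v ∈ G.Vs, G.Conn K u v) ∧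
    (∀ i ∈ K, ∀ v ∈ G.Vs, ∃! e, e ∈ G.Es ∧ e.2.2 = i ∧ incid e v)

/-- The connected component of `G_S` containing the vertex `v`. -/
def comp (G : MG V) (S : Finset ℕ) (v : V) : Set V := {w | G.Conn S v w}

/-- The poset `P_Λ` associated to a `K`-colored multigraph: its elements are pairs
`(H, S)` of a subset `S ⊆ K` and a connected component `H` of `G_S`. -/
def PElem (K : Finset ℕ) (G : MG V) : Type :=
  {p : Set V × Finset ℕ // p.2 ⊆ K ∧ ∃ v ∈ G.Vs, p.1 = G.comp p.2 v}

/-- The order of `P_Λ`: `(H, S) ≤ (H', S')` iff `S' ⊆ S` and `H' ⊆ H`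
(so that `(G, K)` is the least element). -/
instance (K : Finset ℕ) (G : MG V) : PartialOrder (PElem K G) where
  le p q := q.1.2 ⊆ p.1.2 ∧ q.1.1 ⊆ p.1.1
  le_refl p := ⟨subset_rfl, subset_rfl⟩
  le_trans p q r h₁ h₂ := ⟨h₂.1.trans h₁.1, h₂.2.trans h₁.2⟩
  le_antisymm p q h₁ h₂ :=
    Subtype.ext (Prod.ext (subset_antisymm h₂.2 h₁.2) (subset_antisymm h₂.1 h₁.1))

/-- The subgraph of `G` with vertex set `H` and the edges of `G_S` joining vertices
of `H`, viewed as an `S`-colored multigraph. -/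
def restrict (G : MG V) (S : Finset ℕ) (H : Set V) : MG V where
  Vs := G.Vs.filter (· ∈ H)
  Es := G.Es.filter fun e => e.2.2 ∈ S ∧ e.1 ∈ H ∧ e.2.1 ∈ H

/-- The cancelling `del_{x,y} Λ` of the pair of vertices `x, y` in a `K`-colored
multigraph: delete `x`, `y` and all edges incident to them, and for every color
`i ∈ K` not realized on an edge joining `x` and `y`, add a new edge of color `i`
joining the color-`i` neighbour of `x` to the color-`i` neighbour of `y`. -/
def del (K : Finset ℕ) (G : MG V) (x y : V) : MG V :=
  { Vs := G.Vs \ {x, y}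
    Es := (G.Es.filter fun e => ¬ incid e x ∧ ¬ incid e y) ∪
      ((G.Vs ×ˢ G.Vs ×ˢ
          (K \ (K.filter fun i => ∃ e ∈ G.Es, e.2.2 = i ∧ joins e x y))).filter fun q =>
        q.1 ≠ x ∧ q.1 ≠ y ∧ q.2.1 ≠ x ∧ q.2.1 ≠ y ∧
        (∃ e ∈ G.Es, e.2.2 = q.2.2 ∧ joins e x q.1) ∧
        (∃ e ∈ G.Es, e.2.2 = q.2.2 ∧ joins e y q.2.1)) }

end MG

/-!
For colour sets `S ⊆ T` the components of `G_T` partition the vertices and each component of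
`G_S` lies in exactly one of them. So below an element `(H, S)` of `P_Λ` there is exactly one
element with colour set `T` for each `S ⊆ T ⊆ K`; taking `T = K \ {i}` for `i ∉ S` gives the
unique vertex of colour `i` below `(H, S)`.
-/

namespace Finset

variable {α : Type*} [DecidableEq α] {S K : Finset α}

lemma card_sdiff_eq_one_iff_eq_sdiff_singleton (hS : S ⊆ K) :
    (K \ S).card = 1 ↔ ∃ i ∈ K, S = K \ {i} := by
  constructor
  · intro h
    obtain ⟨i, hi⟩ := card_eq_one.mp h
    refine ⟨i, (mem_sdiff.mp (hi ▸ mem_singleton_self i)).1, ?_⟩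
    rw [← hi, sdiff_sdiff_eq_self hS]
  · rintro ⟨i, hiK, rfl⟩
    rw [sdiff_sdiff_eq_self (singleton_subset_iff.mpr hiK), card_singleton]

lemma eq_of_sdiff_eq_sdiff {T : Finset α} (hS : S ⊆ K) (hT : T ⊆ K) (h : K \ S = K \ T) :
    S = T := by
  rw [← sdiff_sdiff_eq_self hS, h, sdiff_sdiff_eq_self hT]

end Finset

namespace MG

variable {V : Type} {G : MG V} {S T : Finset ℕ}

lemma adj_symm {u v : V} (h : G.Adj S u v) : G.Adj S v u :=
  let ⟨hu, hv, e, he, hc, hj⟩ := h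
  ⟨hv, hu, e, he, hc, hj.symm⟩

lemma conn_symm {u v : V} (h : G.Conn S u v) : G.Conn S v u := by
  induction h with
  | refl => exact .refl
  | tail _ hab ih => exact .head (adj_symm hab) ih

lemma conn_mono (hST : S ⊆ T) {u v : V} (h : G.Conn S u v) : G.Conn T u v :=
  Relation.ReflTransGen.mono
    (fun _ _ ⟨hu, hv, e, he, hc, hj⟩ => ⟨hu, hv, e, he, hST hc, hj⟩) _ _ h

lemma mem_comp_self (v : V) : v ∈ G.comp S v := Relation.ReflTransGen.refl

lemma comp_mono (hST : S ⊆ T) (v : V) : G.comp S v ⊆ G.comp T v :=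
  fun _ hw => conn_mono hST hw

lemma comp_eq_of_mem {a b u : V} (ha : u ∈ G.comp S a) (hb : u ∈ G.comp S b) :
    G.comp S a = G.comp S b := by
  ext w
  exact ⟨fun hw => hb.trans ((conn_symm ha).trans hw),
    fun hw => ha.trans ((conn_symm hb).trans hw)⟩

namespace PElem

variable {K : Finset ℕ}

lemma eq_of_colors_eq_of_mem {v w : PElem K G} (hS : v.1.2 = w.1.2) {u : V}
    (hv : u ∈ v.1.1) (hw : u ∈ w.1.1) : v = w := by
  obtain ⟨_, a, _, ha⟩ := v.2
  obtain ⟨_, b, _, hb⟩ := w.2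
  refine Subtype.ext (Prod.ext ?_ hS)
  rw [ha, hS] at hv ⊢
  rw [hb] at hw ⊢
  exact comp_eq_of_mem hv hw

lemma eq_of_le_of_colors_eq {p v w : PElem K G} (hv : v ≤ p) (hw : w ≤ p)
    (hS : v.1.2 = w.1.2) : v = w := by
  obtain ⟨_, u, _, hp⟩ := p.2
  have hu : u ∈ p.1.1 := hp ▸ mem_comp_self u
  exact eq_of_colors_eq_of_mem hS (hv.2 hu) (hw.2 hu)

lemma exists_le_colors_eq (p : PElem K G) (hTK : T ⊆ K) (hpT : p.1.2 ⊆ T) :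
    ∃ v : PElem K G, v.1.2 = T ∧ v ≤ p := by
  obtain ⟨_, u, hu, hp⟩ := p.2
  exact ⟨⟨(G.comp T u, T), hTK, u, hu, rfl⟩, rfl, hpT, hp ▸ comp_mono hpT u⟩

end PElem

end MG

theorem stmt5_general (d : ℕ) {V : Type} (G : MG V) :
    (∀ p : MG.PElem (Finset.Icc 1 d) G,
      ((Finset.Icc 1 d \ p.1.2).card = 1 ↔
        ∃ i ∈ Finset.Icc 1 d, p.1.2 = Finset.Icc 1 d \ {i})) ∧
    (∀ p : MG.PElem (Finset.Icc 1 d) G, ∀ i ∈ Finset.Icc 1 d \ p.1.2,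
      ∃! v : MG.PElem (Finset.Icc 1 d) G, Finset.Icc 1 d \ v.1.2 = {i} ∧ v ≤ p) ∧
    (∀ p v : MG.PElem (Finset.Icc 1 d) G, (Finset.Icc 1 d \ v.1.2).card = 1 → v ≤ p →
      Finset.Icc 1 d \ v.1.2 ⊆ Finset.Icc 1 d \ p.1.2) ∧
    (∀ p v w : MG.PElem (Finset.Icc 1 d) G,
      (Finset.Icc 1 d \ v.1.2).card = 1 → (Finset.Icc 1 d \ w.1.2).card = 1 →
      v ≤ p → w ≤ p → v ≠ w →
      Finset.Icc 1 d \ v.1.2 ≠ Finset.Icc 1 d \ w.1.2) := by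
  set K := Finset.Icc 1 d
  refine ⟨fun p => Finset.card_sdiff_eq_one_iff_eq_sdiff_singleton p.2.1, ?_,
    fun p v _ hle => Finset.sdiff_subset_sdiff subset_rfl hle.1, ?_⟩
  · intro p i hi
    obtain ⟨hiK, hip⟩ := Finset.mem_sdiff.mp hi
    have hsd : K \ (K \ {i}) = {i} :=
      Finset.sdiff_sdiff_eq_self (Finset.singleton_subset_iff.mpr hiK)
    obtain ⟨v, hvS, hvp⟩ := p.exists_le_colors_eq Finset.sdiff_subset
      (Finset.subset_sdiff.mpr ⟨p.2.1, Finset.disjoint_singleton_right.mpr hip⟩)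
    rw [← hvS] at hsd
    refine ⟨v, ⟨hsd, hvp⟩, fun w ⟨hwS, hwp⟩ => ?_⟩
    exact MG.PElem.eq_of_le_of_colors_eq hwp hvp
      (Finset.eq_of_sdiff_eq_sdiff w.2.1 v.2.1 (hwS.trans hsd.symm))
  · intro p v w _ _ hvp hwp hvw hS
    exact hvw <|
      MG.PElem.eq_of_le_of_colors_eq hvp hwp (Finset.eq_of_sdiff_eq_sdiff v.2.1 w.2.1 hS)

/-- For an admissible `d`-colored multigraph `Λ` with nonempty vertex set:
(a) the vertices (rank-1 elements) of `P_Λ` are exactly the pairs `(H, {1,…,d}\{i})`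
with `i ∈ {1,…,d}` (`H` being a component of `G_{{1,…,d}\{i}}` by definition of `P_Λ`);
(b) sending such a vertex to `i` is a proper `d`-coloring: for every `(H,S) ∈ P_Λ` and
every `i ∈ {1,…,d} \ S` there is a unique vertex of color `i` below `(H,S)`, every
vertex below `(H,S)` has its color in `{1,…,d} \ S`, and in particular distinct vertices
below a common element receive distinct colors. -/
theorem stmt5 (d : ℕ) (hd : 1 ≤ d) {V : Type} (G : MG V)
    (hG : MG.Admissible (Finset.Icc 1 d) G) (hne : G.Vs.Nonempty) :
    (∀ p : MG.PElem (Finset.Icc 1 d) G,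
      ((Finset.Icc 1 d \ p.1.2).card = 1 ↔
        ∃ i ∈ Finset.Icc 1 d, p.1.2 = Finset.Icc 1 d \ {i})) ∧
    (∀ p : MG.PElem (Finset.Icc 1 d) G, ∀ i ∈ Finset.Icc 1 d \ p.1.2,
      ∃! v : MG.PElem (Finset.Icc 1 d) G, Finset.Icc 1 d \ v.1.2 = {i} ∧ v ≤ p) ∧
    (∀ p v : MG.PElem (Finset.Icc 1 d) G, (Finset.Icc 1 d \ v.1.2).card = 1 → v ≤ p →
      Finset.Icc 1 d \ v.1.2 ⊆ Finset.Icc 1 d \ p.1.2) ∧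
    (∀ p v w : MG.PElem (Finset.Icc 1 d) G,
      (Finset.Icc 1 d \ v.1.2).card = 1 → (Finset.Icc 1 d \ w.1.2).card = 1 →
      v ≤ p → w ≤ p → v ≠ w →
      Finset.Icc 1 d \ v.1.2 ≠ Finset.Icc 1 d \ w.1.2) :=
  stmt5_general d G
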